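/- arXiv:1806.10110 — 4 statements merged into one kernel-verified Lean document; each statement's English description precedes it below -/
import Mathlib

section
/- Let A be a C*-algebra and π : A → B(H) a representation on a Hilbert space H. Suppose H contains a non-zero finite-dimensional π(A)-invariant closed subspace K such that the restriction π₁ of π to K is not weakly contained in the restriction π₀ of π to the orthogonal complement K⊥ (i.e. ker π₀ is not contained in ker π₁). Then π(A) contains a non-zero compact operator. -/
/-- Let `A` be a C*-algebra and `π : A → B(H)` a representation on a Hilbert
space `H`. Suppose `H` contains a non-zero finite-dimensional `π(A)`-invariant closed
subspace `K` such that the restriction `π₁` of `π` to `K` is not weakly contained in the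
restriction `π₀` of `π` to `K^⊥` (i.e. `ker π₀` is not contained in `ker π₁`, equivalently
there exists `a` with `π₀ a = 0` but `π₁ a ≠ 0`).  Then `π(A)` contains a non-zero compact
operator. -/
theorem stmt0
    {A : Type*} [NormedRing A] [StarRing A] [CStarRing A] [NormedAlgebra ℂ A]
    [StarModule ℂ A]
    {H : Type*} [NormedAddCommGroup H] [InnerProductSpace ℂ H] [CompleteSpace H]
    (π : A →⋆ₐ[ℂ] (H →L[ℂ] H))
    (K : Submodule ℂ H) (hKclosed : IsClosed (K : Set H))
    (hKne : K ≠ ⊥) (hKfin : FiniteDimensional ℂ K)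
    (hKinv : ∀ a : A, ∀ v ∈ K, π a v ∈ K)
    -- `ker π₀ ⊄ ker π₁` : some `a ∈ A` kills `K^⊥` but not `K`
    (hker : ¬ (∀ a : A, (∀ v ∈ Kᗮ, π a v = 0) → (∀ v ∈ K, π a v = 0))) :
    ∃ a : A, π a ≠ 0 ∧ IsCompactOperator (π a) := by
  push_neg at hker
  obtain ⟨a, h0, v₀, hv₀K, hv₀⟩ := hker
  haveI : CompleteSpace K := hKfin.complete ℂ
  -- range of π a lies in K
  have hrange : ∀ v : H, π a v ∈ K := by
    intro v
    have hdec : v = (K.orthogonalProjection v : H) + (v - K.orthogonalProjection v) := by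
      abel
    have h1 : π a (v - K.orthogonalProjection v) = 0 :=
      h0 _ (K.sub_starProjection_mem_orthogonal v)
    have h2 : π a ((K.orthogonalProjection v : H)) ∈ K :=
      hKinv a _ (K.orthogonalProjection v).2
    have heq : π a v = π a ((K.orthogonalProjection v : H)) := by
      conv_lhs => rw [hdec]
      rw [map_add, h1, add_zero]
    rw [heq]; exact h2
  refine ⟨a, ?_, ?_⟩
  · intro h
    exact hv₀ (by simp [h])
  · refine ⟨(Subtype.val : K → H) '' Metric.closedBall 0 ‖π a‖, ?_, ?_⟩
    · exact ((isCompact_closedBall (0 : K) ‖π a‖)).image continuous_subtype_val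
    · refine Filter.mem_of_superset (Metric.closedBall_mem_nhds 0 one_pos) ?_
      intro v hv
      refine ⟨⟨π a v, hrange v⟩, ?_, rfl⟩
      rw [Metric.mem_closedBall, dist_zero_right]
      calc ‖(⟨π a v, hrange v⟩ : K)‖ = ‖π a v‖ := rfl
        _ ≤ ‖π a‖ * ‖v‖ := (π a).le_opNorm v
        _ ≤ ‖π a‖ * 1 := by
            have := mem_closedBall_zero_iff.mp hv
            exact mul_le_mul_of_nonneg_left this (norm_nonneg _)
        _ = ‖π a‖ := mul_one _
end

section
/- Let G be a countable group, H and L subgroups of G, and σ a unitary representation of H. Let S be a set of representatives for the double cosets H\G/L. Then the restriction to L of the induced representation Ind_H^G σ is unitarily equivalent to the direct sum over s ∈ S of the induced representations Ind_{s⁻¹Hs ∩ L}^L (σ^s restricted to s⁻¹Hs ∩ L), where σ^s(x) = σ(sxs⁻¹) for x ∈ s⁻¹Hs. -/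
section IndModel

variable {G : Type*} [Group G] {K : Type*} [NormedAddCommGroup K] [InnerProductSpace ℂ K]

/-- Equivariance condition in the `ℓ²`-model of an induced representation. -/
def IndEquivariant (H : Subgroup G) (σ : H → (K ≃ₗᵢ[ℂ] K)) (f : G → K) : Prop :=
  ∀ (h : H) (x : G), f (↑h * x) = σ h (f x)

/-- Square-summability over the right coset space `H\G`. -/
def IndSqSummable (H : Subgroup G) (f : G → K) : Prop :=
  ∃ N : Quotient (QuotientGroup.rightRel H) → ℝ,
    (∀ x : G, N (Quotient.mk (QuotientGroup.rightRel H) x) = ‖f x‖ ^ 2) ∧ Summable N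

/-- Membership in the Hilbert space of `Ind_H^G σ`. -/
def InIndSpace (H : Subgroup G) (σ : H → (K ≃ₗᵢ[ℂ] K)) (f : G → K) : Prop :=
  IndEquivariant H σ f ∧ IndSqSummable H f

/-- The subgroup `s⁻¹ H s ∩ L` of `L`. -/
def conjInterSub (H L : Subgroup G) (s : G) : Subgroup L where
  carrier := {x : L | s * (x : G) * s⁻¹ ∈ H}
  one_mem' := by simpa using H.one_mem
  mul_mem' := by
    intro a b ha hb
    simpa [mul_assoc, inv_mul_cancel_left] using H.mul_mem ha hb
  inv_mem' := by
    intro a ha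
    simpa [mul_inv_rev, mul_assoc] using H.inv_mem ha

/-- The representation `σ^s` of `s⁻¹ H s ∩ L` : `σ^s x = σ (s x s⁻¹)`, as a family of
unitaries (its multiplicativity is inherited from that of `σ`). -/
def conjRep (H L : Subgroup G) (σ : H → (K ≃ₗᵢ[ℂ] K)) (s : G) :
    conjInterSub H L s → (K ≃ₗᵢ[ℂ] K) :=
  fun x => σ ⟨s * ((x : L) : G) * s⁻¹, x.2⟩

end IndModel

section MackeyAux

variable {G : Type*} [Group G]

lemma mem_conjInterSub {H L : Subgroup G} {s : G} {x : L} :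
    x ∈ conjInterSub H L s ↔ s * (x : G) * s⁻¹ ∈ H := Iff.rfl

/-- The map `(conjInterSub H L s)\L → H\G`, `[x] ↦ [s x]`. -/
def mackeyToFun (H L : Subgroup G) (s : G) :
    Quotient (QuotientGroup.rightRel (conjInterSub H L s)) →
      Quotient (QuotientGroup.rightRel H) :=
  Quotient.lift (fun x : L => Quotient.mk (QuotientGroup.rightRel H) (s * (x : G)))
    (by
      intro a b hab
      have hm : (b : L) * a⁻¹ ∈ conjInterSub H L s := QuotientGroup.rightRel_apply.mp hab
      refine Quotient.sound (QuotientGroup.rightRel_apply.mpr ?_)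
      have : s * ((b * a⁻¹ : L) : G) * s⁻¹ ∈ H := hm
      simpa [mul_assoc] using this)

lemma mackeyToFun_mk (H L : Subgroup G) (s : G) (x : L) :
    mackeyToFun H L s (Quotient.mk (QuotientGroup.rightRel (conjInterSub H L s)) x)
      = Quotient.mk (QuotientGroup.rightRel H) (s * (x : G)) := rfl

def mackeyPhi (H L : Subgroup G) (S : Set G) :
    (Σ s : S, Quotient (QuotientGroup.rightRel (conjInterSub H L (s : G)))) →
      Quotient (QuotientGroup.rightRel H) :=
  fun p => mackeyToFun H L (p.1 : G) p.2

lemma mackeyPhi_bijective (H L : Subgroup G) (S : Set G)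
    (hS : ∀ g : G, ∃! s : G, s ∈ S ∧ ∃ h ∈ H, ∃ l ∈ L, g = h * s * l) :
    Function.Bijective (mackeyPhi H L S) := by
  constructor
  · rintro ⟨s, q⟩ ⟨s', q'⟩ hpq
    induction q using Quotient.ind with | _ x =>
    induction q' using Quotient.ind with | _ x' =>
    have h1 : ((s' : G) * (x' : G)) * ((s : G) * (x : G))⁻¹ ∈ H :=
      QuotientGroup.rightRel_apply.mp (Quotient.exact hpq)
    set h : G := ((s' : G) * (x' : G)) * ((s : G) * (x : G))⁻¹ with hh
    have hdec : (s' : G) = h * (s : G) * ((x : G) * (x' : G)⁻¹) := by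
      rw [hh]; group
    have hss' : (s : G) = (s' : G) := by
      have h2 := (hS (s' : G)).unique
        (y₁ := (s : G)) (y₂ := (s' : G))
        ⟨s.2, h, h1, (x : G) * (x' : G)⁻¹, L.mul_mem x.2 (L.inv_mem x'.2), hdec⟩
        ⟨s'.2, 1, H.one_mem, 1, L.one_mem, by simp⟩
      exact h2
    have hseq : s = s' := Subtype.ext hss'
    subst hseq
    refine Sigma.ext rfl (heq_of_eq ?_)
    refine Quotient.sound (QuotientGroup.rightRel_apply.mpr ?_)
    have : (s : G) * ((x' * x⁻¹ : L) : G) * (s : G)⁻¹ ∈ H := by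
      have : (s : G) * ((x' : G) * (x : G)⁻¹) * (s : G)⁻¹ ∈ H := by
        convert h1 using 1
        rw [hh]; group
      simpa using this
    exact this
  · intro q
    induction q using Quotient.ind with | _ g =>
    obtain ⟨s, ⟨hsS, h, hh, l, hl, hg⟩, -⟩ := hS g
    refine ⟨⟨⟨s, hsS⟩, Quotient.mk _ (⟨l, hl⟩ : L)⟩, ?_⟩
    refine Quotient.sound (QuotientGroup.rightRel_apply.mpr ?_)
    have : g * (s * l)⁻¹ = h := by rw [hg]; group
    rw [this]; exact hh

end MackeyAux

/-- Mackey's restriction formula: let `G` be a countable group, `H, L ≤ G`,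
`σ` a unitary representation of `H` and `S` a system of representatives of the double
cosets `H\G/L`.  Then the restriction to `L` of `Ind_H^G σ` is unitarily equivalent to
`⊕_{s ∈ S} Ind_{s⁻¹Hs ∩ L}^L (σ^s |_{s⁻¹Hs ∩ L})` ; the equivalence is implemented by the
map `f ↦ (s ↦ (x ↦ f (s x)))`, which is a linear bijection of the `Ind`-space of `σ` onto
the `ℓ²`-direct sum of the `Ind`-spaces of the `σ^s`, preserves the norms, and intertwines
the right-translation actions of `L`. -/
theorem stmt4 {G : Type*} [Group G] [Countable G]
    {K : Type*} [NormedAddCommGroup K] [InnerProductSpace ℂ K] [CompleteSpace K]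
    (H L : Subgroup G) (σ : H →* (K ≃ₗᵢ[ℂ] K))
    (S : Set G)
    -- `S` is a system of representatives of `H\G/L`
    (hS : ∀ g : G, ∃! s : G, s ∈ S ∧ ∃ h ∈ H, ∃ l ∈ L, g = h * s * l) :
    -- the intertwiner `U f s x = f (s x)`
    letI U : (G → K) → (S → (L → K)) := fun f s x => f (↑s * ↑x)
    -- membership in the `ℓ²`-direct sum `⊕_{s ∈ S} Ind_{s⁻¹Hs∩L}^L σ^s`
    letI InSum : (S → (L → K)) → Prop := fun F =>
      (∀ s : S, InIndSpace (conjInterSub H L ↑s) (conjRep H L (⇑σ) ↑s) (F s)) ∧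
      ∃ M : (s : S) → Quotient (QuotientGroup.rightRel (conjInterSub H L (s : G))) → ℝ,
        (∀ (s : S) (x : L),
          M s (Quotient.mk (QuotientGroup.rightRel (conjInterSub H L (s : G))) x)
            = ‖F s x‖ ^ 2) ∧
        Summable (fun p : Σ s : S,
            Quotient (QuotientGroup.rightRel (conjInterSub H L (s : G))) => M p.1 p.2)
    -- `U` maps the `Ind`-space into the direct sum
    (∀ f : G → K, InIndSpace H (⇑σ) f → InSum (U f)) ∧
    -- `U` is injective on the `Ind`-space
    (∀ f f' : G → K, InIndSpace H (⇑σ) f → InIndSpace H (⇑σ) f' → U f = U f' → f = f') ∧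
    -- `U` is surjective onto the direct sum
    (∀ F : S → (L → K), InSum F → ∃ f : G → K, InIndSpace H (⇑σ) f ∧ U f = F) ∧
    -- `U` is linear
    (∀ (f f' : G → K) (c : ℂ), U (f + f') = U f + U f' ∧ U (c • f) = c • U f) ∧
    -- `U` preserves the `ℓ²`-norms
    (∀ (f : G → K), InIndSpace H (⇑σ) f →
      ∀ (N : Quotient (QuotientGroup.rightRel H) → ℝ)
        (M : (s : S) → Quotient (QuotientGroup.rightRel (conjInterSub H L (s : G))) → ℝ),
      (∀ x : G, N (Quotient.mk (QuotientGroup.rightRel H) x) = ‖f x‖ ^ 2) → Summable N →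
      (∀ (s : S) (x : L),
        M s (Quotient.mk (QuotientGroup.rightRel (conjInterSub H L (s : G))) x)
          = ‖U f s x‖ ^ 2) →
      Summable (fun p : Σ s : S,
          Quotient (QuotientGroup.rightRel (conjInterSub H L (s : G))) => M p.1 p.2) →
      (∑' p : Σ s : S,
          Quotient (QuotientGroup.rightRel (conjInterSub H L (s : G))), M p.1 p.2)
        = ∑' q, N q) ∧
    -- `U` intertwines the right translation actions of `L`
    (∀ (f : G → K) (g : L) (s : S),
      U (fun x => f (x * ↑g)) s = fun x : L => U f s (x * g)) := by
  beta_reduce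
  have Φbij := mackeyPhi_bijective H L S hS
  let Φe : (Σ s : S, Quotient (QuotientGroup.rightRel (conjInterSub H L (s : G))))
      ≃ Quotient (QuotientGroup.rightRel H) := Equiv.ofBijective _ Φbij
  refine ⟨?_, ?_, ?_, ?_, ?_, ?_⟩
  · -- U maps Ind-space into the direct sum
    intro f hf
    constructor
    · intro s
      constructor
      · -- equivariance of U f s
        intro m x
        have key : f ((s : G) * ((↑m * x : L) : G))
            = f ((⟨(s : G) * ((m : L) : G) * (s : G)⁻¹, m.2⟩ : H) * ((s : G) * (x : G))) := by
          congr 1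
          push_cast
          group
        show f ((s : G) * ((↑m * x : L) : G)) = _
        rw [key, hf.1 ⟨(s : G) * ((m : L) : G) * (s : G)⁻¹, m.2⟩ ((s : G) * (x : G))]
        rfl
      · -- square-summability of U f s
        obtain ⟨N, hN, hNsum⟩ := hf.2
        refine ⟨fun q => N (mackeyToFun H L (s : G) q), ?_, ?_⟩
        · intro x; exact hN ((s : G) * (x : G))
        · have hinj : Function.Injective
              (fun q : Quotient (QuotientGroup.rightRel (conjInterSub H L (s : G))) =>
                mackeyPhi H L S ⟨s, q⟩) := by
            intro q q' hqq'
            exact sigma_mk_injective (β := fun s : S => Quotient (QuotientGroup.rightRel (conjInterSub H L (s : G)))) (Φbij.1 hqq')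
          exact hNsum.comp_injective hinj
    · obtain ⟨N, hN, hNsum⟩ := hf.2
      refine ⟨fun s q => N (mackeyToFun H L (s : G) q), ?_, ?_⟩
      · intro s x; exact hN ((s : G) * (x : G))
      · exact (Equiv.summable_iff Φe).mpr hNsum
  · -- injectivity
    intro f f' hf hf' hU
    funext g
    obtain ⟨s, ⟨hsS, h, hh, l, hl, hg⟩, -⟩ := hS g
    have hUsl : f (s * l) = f' (s * l) := congrFun (congrFun hU ⟨s, hsS⟩) ⟨l, hl⟩
    calc f g = f ((⟨h, hh⟩ : H) * (s * l)) := by rw [hg, mul_assoc]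
      _ = σ ⟨h, hh⟩ (f (s * l)) := hf.1 _ _
      _ = σ ⟨h, hh⟩ (f' (s * l)) := by rw [hUsl]
      _ = f' ((⟨h, hh⟩ : H) * (s * l)) := (hf'.1 _ _).symm
      _ = f' g := by rw [← mul_assoc, ← hg]
  · -- surjectivity
    intro F hF
    obtain ⟨hF1, M, hM, hMsum⟩ := hF
    choose sfun hsS hrest using fun g => (hS g).exists
    choose hfun hhH lfun hlL hdec using hrest
    have huniq : ∀ (g y : G), (y ∈ S ∧ ∃ h ∈ H, ∃ l ∈ L, g = h * y * l) → y = sfun g :=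
      fun g y hy => (hS g).unique hy ⟨hsS g, hfun g, hhH g, lfun g, hlL g, hdec g⟩
    set f : G → K :=
      fun g => σ ⟨hfun g, hhH g⟩ (F ⟨sfun g, hsS g⟩ ⟨lfun g, hlL g⟩) with hfdef
    have master : ∀ (g : G) (s : S) (h : H) (l : L), g = ↑h * ↑s * ↑l →
        f g = σ h (F s l) := by
      intro g s h l hg
      have hseq : (s : G) = sfun g := huniq g s ⟨s.2, h, h.2, l, l.2, hg⟩
      set h₀ : H := ⟨hfun g, hhH g⟩ with hh₀
      set l₀ : L := ⟨lfun g, hlL g⟩ with hl₀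
      have hs' : (⟨sfun g, hsS g⟩ : S) = s := Subtype.ext hseq.symm
      have hc : (↑h : G) * ↑s * ↑l = ↑h₀ * ↑s * ↑l₀ := by
        rw [← hg, hseq]; exact hdec g
      have heq : (s : G) * ((l₀ : G) * (l : G)⁻¹) * (s : G)⁻¹ = (↑h₀ : G)⁻¹ * ↑h := by
        calc (s : G) * ((l₀ : G) * (l : G)⁻¹) * (s : G)⁻¹
            = (↑h₀ : G)⁻¹ * (↑h₀ * ↑s * ↑l₀) * (l : G)⁻¹ * (s : G)⁻¹ := by group
          _ = (↑h₀ : G)⁻¹ * (↑h * ↑s * ↑l) * (l : G)⁻¹ * (s : G)⁻¹ := by rw [hc]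
          _ = (↑h₀ : G)⁻¹ * ↑h := by group
      have hmem : (l₀ * l⁻¹ : L) ∈ conjInterSub H L (s : G) := by
        show (s : G) * ((l₀ * l⁻¹ : L) : G) * (s : G)⁻¹ ∈ H
        have hcast : ((l₀ * l⁻¹ : L) : G) = (l₀ : G) * (l : G)⁻¹ := rfl
        rw [hcast, heq]
        exact H.mul_mem (H.inv_mem h₀.2) h.2
      set m : conjInterSub H L (s : G) := ⟨l₀ * l⁻¹, hmem⟩ with hm
      have hml : (↑m : L) * l = l₀ := by
        show l₀ * l⁻¹ * l = l₀
        simp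
      have hequi := (hF1 s).1 m l
      rw [hml] at hequi
      have helt : (⟨(s : G) * (((m : L)) : G) * (s : G)⁻¹, m.2⟩ : H) = h₀⁻¹ * h := by
        apply Subtype.ext
        show (s : G) * (((m : L)) : G) * (s : G)⁻¹ = ((h₀⁻¹ * h : H) : G)
        have hcm : (((m : L)) : G) = (l₀ : G) * (l : G)⁻¹ := rfl
        rw [hcm, heq]
        rfl
      have hFl₀ : F s l₀ = σ (h₀⁻¹ * h) (F s l) := by
        rw [hequi]; show σ _ _ = _; rw [helt]
      have hfg : f g = σ h₀ (F (⟨sfun g, hsS g⟩ : S) l₀) := rfl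
      rw [hfg, hs', hFl₀]
      show (σ h₀ * σ (h₀⁻¹ * h)) (F s l) = σ h (F s l)
      rw [← map_mul, mul_inv_cancel_left]
    have dx : ∀ (a : G) (c : G), c * a = c * hfun a * sfun a * lfun a := by
      intro a c
      conv_lhs => rw [hdec a]
      simp [mul_assoc]
    refine ⟨f, ⟨?_, ?_⟩, ?_⟩
    · -- equivariance of f
      intro h₀ x
      have h1 : f x = σ ⟨hfun x, hhH x⟩ (F ⟨sfun x, hsS x⟩ ⟨lfun x, hlL x⟩) := rfl
      have h2 : f (↑h₀ * x)
          = σ (h₀ * ⟨hfun x, hhH x⟩) (F ⟨sfun x, hsS x⟩ ⟨lfun x, hlL x⟩) :=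
        master _ _ _ _ (dx x ↑h₀)
      rw [h2, map_mul, h1]
      show (σ h₀ * σ ⟨hfun x, hhH x⟩) (F ⟨sfun x, hsS x⟩ ⟨lfun x, hlL x⟩) = _
      rfl
    · -- square-summability of f
      have fconst : ∀ a b : G, (QuotientGroup.rightRel H) a b → ‖f a‖ ^ 2 = ‖f b‖ ^ 2 := by
        intro a b hab
        have hmem : b * a⁻¹ ∈ H := QuotientGroup.rightRel_apply.mp hab
        have : f b = σ ⟨b * a⁻¹, hmem⟩ (f a) := by
          have : f ((⟨b * a⁻¹, hmem⟩ : H) * a) = σ ⟨b * a⁻¹, hmem⟩ (f a) := by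
            have h2 : f (↑(⟨b * a⁻¹, hmem⟩ : H) * a)
                = σ ((⟨b * a⁻¹, hmem⟩ : H) * ⟨hfun a, hhH a⟩)
                    (F ⟨sfun a, hsS a⟩ ⟨lfun a, hlL a⟩) :=
              master _ _ _ _ (dx a _)
            rw [h2, map_mul]
            show (σ _ * σ _) _ = _
            rfl
          simpa [inv_mul_cancel_right] using this
        rw [this]
        exact (congrArg (fun t => t ^ 2) ((σ ⟨b * a⁻¹, hmem⟩).norm_map (f a))).symm
      refine ⟨Quotient.lift (fun g => ‖f g‖ ^ 2) fconst, fun x => rfl, ?_⟩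
      have hUfF : ∀ (s : S) (x : L), f ((s : G) * (x : G)) = F s x := by
        intro s x
        have := master ((s : G) * (x : G)) s 1 x (by simp)
        simpa using this
      have key : (fun p : Σ s : S,
            Quotient (QuotientGroup.rightRel (conjInterSub H L (s : G))) =>
            Quotient.lift (fun g => ‖f g‖ ^ 2) fconst (mackeyPhi H L S p))
          = fun p => M p.1 p.2 := by
        funext p
        rcases p with ⟨s, q⟩
        induction q using Quotient.ind with | _ x =>
        show ‖f ((s : G) * (x : G))‖ ^ 2 = M s _
        rw [hM s x, hUfF s x]
      exact (Equiv.summable_iff Φe).mp (by rw [show ((Quotient.lift (fun g => ‖f g‖ ^ 2) fconst) ∘ Φe) = fun p => M p.1 p.2 from key]; exact hMsum)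
    · -- U f = F
      funext s x
      have := master ((s : G) * (x : G)) s 1 x (by simp)
      simpa using this
  · -- linearity
    intro f f' c
    exact ⟨rfl, rfl⟩
  · -- norm preservation
    intro f hf N M hN hNsum hM hMsum
    have key : (fun p : Σ s : S,
          Quotient (QuotientGroup.rightRel (conjInterSub H L (s : G))) => M p.1 p.2)
        = fun p => N (mackeyPhi H L S p) := by
      funext p
      rcases p with ⟨s, q⟩
      induction q using Quotient.ind with | _ x =>
      show M s _ = N _
      rw [hM s x]
      exact (hN ((s : G) * (x : G))).symm
    rw [key]
    exact Equiv.tsum_eq Φe N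
  · -- intertwining
    intro f g s
    funext x
    exact congrArg f (by push_cast; rw [mul_assoc])
end

section
/- Let G be a countable group, H a subgroup of G, and σ a unitary representation of H. If the induced representation Ind_H^G σ contains a non-zero finite-dimensional subrepresentation of G, then H has finite index in G. -/
open scoped ENNReal

theorem stmt5_aux {G : Type*} [Group G]
    {K : Type*} [NormedAddCommGroup K] [InnerProductSpace ℂ K]
    (H : Subgroup G) (σ : H →* (K ≃ₗᵢ[ℂ] K))
    (V : Submodule ℂ (G → K))
    (hV0 : V ≠ ⊥) (hVfin : FiniteDimensional ℂ V)
    (hVind : ∀ f ∈ V, InIndSpace H (⇑σ) f)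
    (hVinv : ∀ (g : G), ∀ f ∈ V, (fun x => f (x * g)) ∈ V)
    (hQ : Infinite (Quotient (QuotientGroup.rightRel H))) : False := by
  classical
  set Q := Quotient (QuotientGroup.rightRel H) with hQdef
  -- Step A: norm constancy on right cosets
  have normEq : ∀ f ∈ V, ∀ x y : G,
      Quotient.mk (QuotientGroup.rightRel H) x = Quotient.mk (QuotientGroup.rightRel H) y →
      ‖f y‖ = ‖f x‖ := by
    intro f hf x y hxy
    have hrel : y * x⁻¹ ∈ H := QuotientGroup.rightRel_apply.mp (Quotient.exact hxy)
    have h1 : f y = σ ⟨y * x⁻¹, hrel⟩ (f x) := by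
      have h2 := (hVind f hf).1 ⟨y * x⁻¹, hrel⟩ x
      simpa [inv_mul_cancel_right] using h2
    rw [h1]
    exact (σ _).norm_map _
  -- Step B: lp membership
  have memlp : ∀ f ∈ V, Memℓp (fun q : Q => f q.out) 2 := by
    intro f hf
    apply memℓp_gen
    obtain ⟨N, hN1, hN2⟩ := (hVind f hf).2
    have heq : (fun q : Q => ‖f q.out‖ ^ (2 : ℝ≥0∞).toReal) = N := by
      funext q
      have h3 := hN1 q.out
      rw [Quotient.out_eq] at h3
      rw [h3, show ((2 : ℝ≥0∞)).toReal = ((2 : ℕ) : ℝ) by norm_num, Real.rpow_natCast]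
    rw [heq]
    exact hN2
  -- Step C: the linear map into lp
  let E := lp (fun _ : Q => K) 2
  let Ψ : V →ₗ[ℂ] E :=
    { toFun := fun v => ⟨fun q => (v : G → K) q.out, memlp v v.2⟩
      map_add' := by intro u v; apply Subtype.ext; funext q; rfl
      map_smul' := by intro c v; apply Subtype.ext; funext q; rfl }
  have Ψapp : ∀ (v : G → K) (hv : v ∈ V) (q : Q), (Ψ ⟨v, hv⟩ : ∀ _ : Q, K) q = v q.out :=
    fun v hv q => rfl
  -- Step D: the range and a basis
  let W := LinearMap.range Ψ
  haveI hWfin : FiniteDimensional ℂ W := inferInstance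
  let n := Module.finrank ℂ W
  let b : Module.Basis (Fin n) ℂ W := Module.finBasis ℂ W
  let L : W →L[ℂ] (Fin n → ℂ) := LinearMap.toContinuousLinearMap b.equivFun.toLinearMap
  set C := ‖L‖ with hC
  have hcoef : ∀ (w : W) (i : Fin n), ‖b.equivFun w i‖ ≤ C * ‖w‖ := by
    intro w i
    calc ‖b.equivFun w i‖ = ‖L w i‖ := rfl
      _ ≤ ‖L w‖ := norm_le_pi_norm (L w) i
      _ ≤ C * ‖w‖ := L.le_opNorm w
  let Φ : Q → ℝ := fun q => ∑ i, ‖((b i : E) : ∀ _ : Q, K) q‖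
  -- Step E: pointwise bound
  have keybound : ∀ (w : W) (q : Q), ‖((w : E) : ∀ _ : Q, K) q‖ ≤ (C * ‖w‖) * Φ q := by
    intro w q
    have hw : ((w : E) : ∀ _ : Q, K) q = ∑ i, b.equivFun w i • (((b i : E) : ∀ _ : Q, K) q) := by
      conv_lhs => rw [← b.sum_equivFun w]
      rw [Submodule.coe_sum, lp.coeFn_sum, Finset.sum_apply]
      rfl
    rw [hw]
    calc ‖∑ i, b.equivFun w i • (((b i : E) : ∀ _ : Q, K) q)‖
        ≤ ∑ i, ‖b.equivFun w i • (((b i : E) : ∀ _ : Q, K) q)‖ := norm_sum_le _ _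
      _ = ∑ i, ‖b.equivFun w i‖ * ‖((b i : E) : ∀ _ : Q, K) q‖ := by
          simp [norm_smul]
      _ ≤ ∑ i, (C * ‖w‖) * ‖((b i : E) : ∀ _ : Q, K) q‖ := by
          refine Finset.sum_le_sum fun i _ => ?_
          exact mul_le_mul_of_nonneg_right (hcoef w i) (norm_nonneg _)
      _ = (C * ‖w‖) * Φ q := (Finset.mul_sum _ _ _).symm
  -- Step F: Φ tends to zero along cofinite
  have hΦ0 : Filter.Tendsto Φ Filter.cofinite (nhds 0) := by
    have hterm : ∀ i : Fin n,
        Filter.Tendsto (fun q : Q => ‖((b i : E) : ∀ _ : Q, K) q‖) Filter.cofinite (nhds 0) := by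
      intro i
      have hm : Memℓp (((b i : E) : ∀ _ : Q, K)) 2 := lp.memℓp (b i : E)
      have hsum : Summable (fun q : Q => ‖((b i : E) : ∀ _ : Q, K) q‖ ^ (2 : ℝ≥0∞).toReal) :=
        (memℓp_gen_iff (by norm_num : (0 : ℝ) < (2 : ℝ≥0∞).toReal)).mp hm
      have h0 := hsum.tendsto_cofinite_zero
      have h1 : Filter.Tendsto
          ((fun x : ℝ => Real.sqrt x) ∘ fun q : Q => ‖((b i : E) : ∀ _ : Q, K) q‖ ^ (2 : ℝ≥0∞).toReal)
          Filter.cofinite (nhds 0) := by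
        have := (Real.continuous_sqrt.continuousAt (x := (0:ℝ))).tendsto.comp h0
        simpa using this
      have h2 : ((fun x : ℝ => Real.sqrt x) ∘
            fun q : Q => ‖((b i : E) : ∀ _ : Q, K) q‖ ^ (2 : ℝ≥0∞).toReal)
          = fun q : Q => ‖((b i : E) : ∀ _ : Q, K) q‖ := by
        funext q
        simp only [Function.comp_apply]
        rw [show ((2 : ℝ≥0∞)).toReal = ((2 : ℕ) : ℝ) by norm_num, Real.rpow_natCast,
          Real.sqrt_sq (norm_nonneg _)]
      rwa [h2] at h1
    have := tendsto_finset_sum (Finset.univ : Finset (Fin n)) (fun i _ => hterm i)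
    simpa using this
  -- Step G: nonzero vector and translation invariance of the norm
  obtain ⟨f₀, hf₀V, hf₀ne⟩ := (Submodule.ne_bot_iff V).mp hV0
  obtain ⟨x₀, hx₀⟩ : ∃ x, f₀ x ≠ 0 := by
    by_contra hcon
    push_neg at hcon
    exact hf₀ne (funext hcon)
  -- the right-translation equivalence of Q
  have τrel : ∀ (g x y : G), (QuotientGroup.rightRel H) x y ↔
      (QuotientGroup.rightRel H) (x * g) (y * g) := by
    intro g x y
    rw [QuotientGroup.rightRel_apply, QuotientGroup.rightRel_apply]
    have : y * g * (x * g)⁻¹ = y * x⁻¹ := by group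
    rw [this]
  let τ : G → (Q ≃ Q) := fun g => Quotient.congr (Equiv.mulRight g) (fun x y => τrel g x y)
  have τmk : ∀ (g x : G), τ g (Quotient.mk (QuotientGroup.rightRel H) x)
      = Quotient.mk (QuotientGroup.rightRel H) (x * g) := fun g x => rfl
  have h2pos : (0 : ℝ) < (2 : ℝ≥0∞).toReal := by norm_num
  have sqnorm : ∀ y : E, ‖y‖ = Real.sqrt (‖y‖ ^ (2 : ℝ≥0∞).toReal) := by
    intro y
    rw [show ((2 : ℝ≥0∞)).toReal = ((2 : ℕ) : ℝ) by norm_num, Real.rpow_natCast,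
      Real.sqrt_sq (norm_nonneg _)]
  have normtrans : ∀ g : G,
      ‖Ψ ⟨fun x => f₀ (x * g), hVinv g f₀ hf₀V⟩‖ = ‖Ψ ⟨f₀, hf₀V⟩‖ := by
    intro g
    have e1 := lp.norm_rpow_eq_tsum h2pos (Ψ ⟨fun x => f₀ (x * g), hVinv g f₀ hf₀V⟩)
    have e2 := lp.norm_rpow_eq_tsum h2pos (Ψ ⟨f₀, hf₀V⟩)
    have hfun : (fun q : Q => ‖(Ψ ⟨fun x => f₀ (x * g), hVinv g f₀ hf₀V⟩ : ∀ _ : Q, K) q‖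
          ^ (2 : ℝ≥0∞).toReal)
        = (fun q : Q => ‖(Ψ ⟨f₀, hf₀V⟩ : ∀ _ : Q, K) q‖ ^ (2 : ℝ≥0∞).toReal) ∘ (τ g) := by
      funext q
      simp only [Function.comp_apply]
      rw [Ψapp, Ψapp]
      have hmk : Quotient.mk (QuotientGroup.rightRel H) ((τ g q).out)
          = Quotient.mk (QuotientGroup.rightRel H) (q.out * g) := by
        rw [Quotient.out_eq, ← τmk g q.out, Quotient.out_eq]
      rw [normEq f₀ hf₀V (q.out * g) ((τ g q).out) hmk.symm]
    have key : (∑' q : Q, ‖(Ψ ⟨fun x => f₀ (x * g), hVinv g f₀ hf₀V⟩ : ∀ _ : Q, K) q‖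
          ^ (2 : ℝ≥0∞).toReal)
        = ∑' q : Q, ‖(Ψ ⟨f₀, hf₀V⟩ : ∀ _ : Q, K) q‖ ^ (2 : ℝ≥0∞).toReal := by
      rw [hfun]
      exact Equiv.tsum_eq (τ g)
        (fun q : Q => ‖(Ψ ⟨f₀, hf₀V⟩ : ∀ _ : Q, K) q‖ ^ (2 : ℝ≥0∞).toReal)
    rw [sqnorm (Ψ ⟨fun x => f₀ (x * g), hVinv g f₀ hf₀V⟩), sqnorm (Ψ ⟨f₀, hf₀V⟩), e1, e2, key]
  -- Step H: uniform lower bound and contradiction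
  set r := ‖Ψ ⟨f₀, hf₀V⟩‖ with hr
  have lower : ∀ q : Q, ‖f₀ x₀‖ ≤ (C * r) * Φ q := by
    intro q
    set g := q.out⁻¹ * x₀ with hg
    have hmem : (fun x => f₀ (x * g)) ∈ V := hVinv g f₀ hf₀V
    let w : W := ⟨Ψ ⟨fun x => f₀ (x * g), hmem⟩, ⟨_, rfl⟩⟩
    have h1 : ((w : E) : ∀ _ : Q, K) q = f₀ x₀ := by
      show f₀ (q.out * (q.out⁻¹ * x₀)) = f₀ x₀
      rw [mul_inv_cancel_left]
    have h2 : ‖w‖ = r := normtrans g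
    calc ‖f₀ x₀‖ = ‖((w : E) : ∀ _ : Q, K) q‖ := by rw [h1]
      _ ≤ (C * ‖w‖) * Φ q := keybound w q
      _ = (C * r) * Φ q := by rw [h2]
  have hpos : (0 : ℝ) < ‖f₀ x₀‖ := norm_pos_iff.mpr hx₀
  have htend : Filter.Tendsto (fun q : Q => (C * r) * Φ q) Filter.cofinite (nhds 0) := by
    simpa using hΦ0.const_mul (C * r)
  have hev := htend.eventually (gt_mem_nhds hpos)
  obtain ⟨q, hq⟩ := hev.exists
  exact absurd (lower q) (not_le.mpr hq)


/-- let `G` be a countable group, `H ≤ G` and `σ` a unitary representation of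
`H`.  If the induced representation `Ind_H^G σ` contains a non-zero finite-dimensional
subrepresentation (i.e. there is a non-zero finite-dimensional subspace of the space of
`Ind_H^G σ` invariant under all right translations), then `H` has finite index in `G`. -/
theorem stmt5 {G : Type*} [Group G] [Countable G]
    {K : Type*} [NormedAddCommGroup K] [InnerProductSpace ℂ K] [CompleteSpace K]
    (H : Subgroup G) (σ : H →* (K ≃ₗᵢ[ℂ] K))
    (V : Submodule ℂ (G → K))
    (hV0 : V ≠ ⊥) (hVfin : FiniteDimensional ℂ V)
    (hVind : ∀ f ∈ V, InIndSpace H (⇑σ) f)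
    (hVinv : ∀ (g : G), ∀ f ∈ V, (fun x => f (x * g)) ∈ V) :
    H.index ≠ 0 := by
  intro hidx
  have h1 : Nonempty (G ⧸ H) := ⟨QuotientGroup.mk 1⟩
  have h2 : Infinite (G ⧸ H) := by
    rw [Subgroup.index] at hidx
    rcases Nat.card_eq_zero.mp hidx with h | h
    · exact absurd h1 (not_nonempty_iff.mpr h)
    · exact h
  have h3 : Infinite (Quotient (QuotientGroup.rightRel H)) :=
    (Equiv.infinite_iff (QuotientGroup.quotientRightRelEquivQuotientLeftRel H)).mpr h2
  exact stmt5_aux H σ V hV0 hVfin hVind hVinv h3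
end

section
/- Let K be an infinite field, n ≥ 2, and L a subgroup of SL_n(K) that stabilizes a line ℓ in Kⁿ (i.e. g·ℓ = ℓ for all g ∈ L). Then for every infinite unital subring R of K, the subgroup L ∩ SL_n(R) has infinite index in SL_n(R). -/
/-- let `K` be an infinite field, `n ≥ 2`, and `L ≤ SL_n(K)` a subgroup
stabilizing a line `ℓ ⊆ Kⁿ`.  Then for every infinite unital subring `R` of `K`, the
subgroup `L ∩ SL_n(R)` has infinite index in `SL_n(R)`.  Here `SL_n(R)` is embedded in
`SL_n(K)` via the inclusion `R ↪ K`, and `L ∩ SL_n(R)` is the preimage of `L` under this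
embedding; infinite index is expressed by `Subgroup.index = 0`. -/
theorem stmt14 {K : Type*} [Field K] [Infinite K]
    (n : ℕ) (hn : 2 ≤ n)
    (L : Subgroup (Matrix.SpecialLinearGroup (Fin n) K))
    (ℓ : Submodule K (Fin n → K)) (hline : Module.finrank K ℓ = 1)
    (hstab : ∀ g ∈ L,
      ℓ.map (Matrix.mulVecLin (g : Matrix (Fin n) (Fin n) K)) = ℓ)
    (R : Subring K) [Infinite R] :
    (L.comap (Matrix.SpecialLinearGroup.map R.subtype)).index = 0 := by
  classical
  -- get a spanning vector
  obtain ⟨v, hv0, hv⟩ := finrank_eq_one_iff'.mp hline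
  set v0 : Fin n → K := (v : Fin n → K) with hv0def
  have hv0ne : v0 ≠ 0 := fun h => hv0 (Subtype.ext h)
  -- choose j with v0 j ≠ 0
  obtain ⟨j, hj⟩ : ∃ j, v0 j ≠ 0 := by
    by_contra h
    push_neg at h
    exact hv0ne (funext h)
  -- choose i ≠ j
  obtain ⟨i, hij⟩ : ∃ i : Fin n, i ≠ j := by
    have : Nontrivial (Fin n) := Fin.nontrivial_iff_two_le.mpr hn
    exact exists_ne j
  -- elementary matrices over R
  have hdet : ∀ t : R, (Matrix.transvection i j t).det = 1 :=
    fun t => Matrix.det_transvection_of_ne i j hij t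
  set g : R → Matrix.SpecialLinearGroup (Fin n) R :=
    fun t => ⟨Matrix.transvection i j t, hdet t⟩ with hg
  have hgmul : ∀ s t : R, g s * g t = g (s + t) := by
    intro s t
    apply Subtype.ext
    exact Matrix.transvection_mul_transvection_same i j hij s t
  have hginv : ∀ t : R, (g t)⁻¹ = g (-t) := by
    intro t
    rw [inv_eq_iff_mul_eq_one, hgmul]
    apply Subtype.ext
    simp [hg]
  -- key: the image transvection stabilizes ℓ only if parameter is 0
  have key : ∀ u : K, ℓ.map (Matrix.mulVecLin (Matrix.transvection i j u)) = ℓ → u = 0 := by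
    intro u hu
    have hmem : (Matrix.transvection i j u).mulVec v0 ∈ ℓ := by
      rw [← hu]
      exact ⟨v0, v.2, rfl⟩
    obtain ⟨c, hc⟩ := hv ⟨_, hmem⟩
    have hc' : c • v0 = (Matrix.transvection i j u).mulVec v0 := congrArg Subtype.val hc
    have hcj : c * v0 j = v0 j := by
      have := congrFun hc' j
      simpa [Matrix.transvection, Matrix.add_mulVec, Matrix.single_mulVec,
        hij.symm, Matrix.one_mulVec] using this
    have hci : c * v0 i = v0 i + u * v0 j := by
      have := congrFun hc' i
      simpa [Matrix.transvection, Matrix.add_mulVec, Matrix.single_mulVec,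
        Matrix.one_mulVec] using this
    have hc1 : c = 1 := mul_right_cancel₀ hj (by rw [hcj, one_mul])
    rw [hc1, one_mul] at hci
    have : u * v0 j = 0 := by linear_combination -hci
    exact (mul_eq_zero.mp this).resolve_right hj
  -- injection from R into the quotient
  rw [Subgroup.index_eq_card]
  rw [Nat.card_eq_zero]
  right
  refine Infinite.of_injective (fun t : R => QuotientGroup.mk (g t)) ?_
  intro s t hst
  have hmem := (QuotientGroup.eq.mp hst)
  rw [hginv, hgmul] at hmem
  rw [Subgroup.mem_comap] at hmem
  have hstabm := hstab _ hmem
  have hcoe : ((Matrix.SpecialLinearGroup.map R.subtype (g (-s + t)) :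
      Matrix.SpecialLinearGroup (Fin n) K) : Matrix (Fin n) (Fin n) K)
      = Matrix.transvection i j ((-s + t : R) : K) := by
    rw [Matrix.SpecialLinearGroup.map_apply_coe]
    ext a b
    simp only [hg, RingHom.mapMatrix_apply, Matrix.map_apply, Matrix.transvection,
      Matrix.add_apply, Matrix.one_apply, Matrix.single, Matrix.of_apply]
    split_ifs <;> simp
  rw [hcoe] at hstabm
  have := key _ hstabm
  have : (-s + t : R) = 0 := Subtype.ext (by simpa using this)
  exact neg_add_eq_zero.mp this
end
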